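/- arXiv:1709.03860 — 2 statements merged into one kernel-verified Lean document; each statement's English description precedes it below -/
import Mathlib

section
/- Let V = V⁺ ⊕ V⁻ be a finite-dimensional complex inner product space as above, Γ the chirality operator (multiplication by i on V⁺ and by −i on V⁻), ω(x,y) = ⟨Γx, y⟩, and T an odd self-adjoint unitary on V. Let Λ_T = ker(T − id_V) be the (+1)-eigenspace of T. Then: (i) ω(x,y) = 0 for all x, y ∈ Λ_T; (ii) Γ(Λ_T) = ker(T + id_V) and Γ(Λ_T) equals the orthogonal complement of Λ_T in V, so V = Λ_T ⊕ Γ(Λ_T); and (iii) 2·dim Λ_T = dim V. In particular Λ_T is a Lagrangian subspace of (V, ω). -/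
/-!
Since `T` exchanges the `±i`-eigenspaces of `Γ`, it anticommutes with `Γ`, and `Γ² = -1`;
so `Γ` maps the `(+1)`-eigenspace `Λ` of `T` bijectively onto the `(-1)`-eigenspace. For a
self-adjoint involution the `(-1)`-eigenspace is the range of the symmetric operator `T - 1`,
i.e. the orthogonal complement of its kernel `Λ`. Hence `ΓΛ = Λᗮ`, which gives `ω(Λ, Λ) = 0`,
`V = Λ ⊕ ΓΛ`, and `dim Λ = dim ΓΛ = dim V / 2`.
-/

open Submodule

namespace LinearMap

section

variable {R M : Type*} [CommRing R] [AddCommGroup M] [Module R M] {P Q : Submodule R M}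
  {Γ T : M →ₗ[R] M} {c : R}

theorem comp_eq_neg_comp_of_swap_eigenspaces (hPQ : Codisjoint P Q)
    (hΓP : ∀ x ∈ P, Γ x = c • x) (hΓQ : ∀ x ∈ Q, Γ x = -c • x)
    (hTP : ∀ x ∈ P, T x ∈ Q) (hTQ : ∀ x ∈ Q, T x ∈ P) :
    T ∘ₗ Γ = -(Γ ∘ₗ T) := by
  refine ext_on_codisjoint hPQ (fun x hx => ?_) (fun x hx => ?_)
  · simp [hΓP x hx, hΓQ _ (hTP x hx)]
  · simp [hΓQ x hx, hΓP _ (hTQ x hx)]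

theorem comp_self_eq_smul_id_of_eigenspaces (hPQ : Codisjoint P Q)
    (hΓP : ∀ x ∈ P, Γ x = c • x) (hΓQ : ∀ x ∈ Q, Γ x = -c • x) :
    Γ ∘ₗ Γ = (c * c) • id := by
  refine ext_on_codisjoint hPQ (fun x hx => ?_) (fun x hx => ?_)
  · simp [hΓP x hx, hΓP _ (P.smul_mem c hx), smul_smul]
  · simp [hΓQ x hx, hΓQ _ (Q.smul_mem _ hx), smul_smul]

theorem map_ker_sub_id_eq_ker_add_id (hTΓ : T ∘ₗ Γ = -(Γ ∘ₗ T)) (hΓΓ : Γ ∘ₗ Γ = -id) :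
    (ker (T - id)).map Γ = ker (T + id) := by
  have hTΓx (x : M) : T (Γ x) = -Γ (T x) := congr($hTΓ x)
  have hΓΓx (x : M) : Γ (Γ x) = -x := congr($hΓΓ x)
  apply le_antisymm
  · rintro _ ⟨x, hx, rfl⟩
    simp only [SetLike.mem_coe, mem_ker, sub_apply, id_apply, sub_eq_zero] at hx
    simp [hTΓx, hx]
  · intro y hy
    simp only [mem_ker, add_apply, id_apply, add_eq_zero_iff_eq_neg] at hy
    refine ⟨-Γ y, ?_, by simp [hΓΓx]⟩
    simp [hTΓx, hy]

theorem range_sub_id_eq_ker_add_id [Invertible (2 : R)] (hT : T ∘ₗ T = id) :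
    range (T - id) = ker (T + id) := by
  have hTTx (x : M) : T (T x) = x := congr($hT x)
  apply le_antisymm
  · rintro _ ⟨x, rfl⟩
    simp [hTTx]
  · intro y hy
    simp only [mem_ker, add_apply, id_apply, add_eq_zero_iff_eq_neg] at hy
    refine ⟨-(⅟2 : R) • y, ?_⟩
    simp only [sub_apply, map_smul, hy, id_apply]
    rw [← neg_add', ← two_smul R, neg_smul, smul_neg, neg_neg, smul_smul, invOf_mul_self,
      one_smul]

end

theorem IsSymmetric.orthogonal_ker_sub_id_eq_ker_add_id {𝕜 E : Type*} [RCLike 𝕜]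
    [NormedAddCommGroup E] [InnerProductSpace 𝕜 E] [FiniteDimensional 𝕜 E] {T : E →ₗ[𝕜] E}
    (hT : T.IsSymmetric) (hTT : T ∘ₗ T = id) :
    (ker (T - id))ᗮ = ker (T + id) := by
  rw [← (hT.sub IsSymmetric.id).orthogonal_range, orthogonal_orthogonal,
    range_sub_id_eq_ker_add_id hTT]

end LinearMap

theorem positive_eigenspace_is_lagrangian_general
    {V : Type*} [NormedAddCommGroup V] [InnerProductSpace ℂ V] [FiniteDimensional ℂ V]
    (Vp Vm : Submodule ℂ V) (hcompl : IsCompl Vp Vm)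
    (Γ : V →ₗ[ℂ] V)
    (hΓp : ∀ x ∈ Vp, Γ x = Complex.I • x)
    (hΓm : ∀ x ∈ Vm, Γ x = (-Complex.I) • x)
    (T : V →ₗ[ℂ] V)
    (hsa : ∀ x y : V, (inner ℂ (T x) y : ℂ) = inner ℂ x (T y))
    (hsq : T ∘ₗ T = LinearMap.id)
    (hoddp : ∀ x ∈ Vp, T x ∈ Vm) (hoddm : ∀ x ∈ Vm, T x ∈ Vp) :
    (∀ x ∈ LinearMap.ker (T - LinearMap.id), ∀ y ∈ LinearMap.ker (T - LinearMap.id),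
        (inner ℂ (Γ x) y : ℂ) = 0) ∧
    (LinearMap.ker (T - LinearMap.id)).map Γ = LinearMap.ker (T + LinearMap.id) ∧
    (LinearMap.ker (T - LinearMap.id)).map Γ = (LinearMap.ker (T - LinearMap.id))ᗮ ∧
    IsCompl (LinearMap.ker (T - LinearMap.id)) ((LinearMap.ker (T - LinearMap.id)).map Γ) ∧
    2 * Module.finrank ℂ (LinearMap.ker (T - LinearMap.id)) = Module.finrank ℂ V := by
  set Λ := LinearMap.ker (T - LinearMap.id)
  have hTΓ :=
    LinearMap.comp_eq_neg_comp_of_swap_eigenspaces hcompl.codisjoint hΓp hΓm hoddp hoddm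
  have hΓΓ : Γ ∘ₗ Γ = -LinearMap.id := by
    rw [LinearMap.comp_self_eq_smul_id_of_eigenspaces hcompl.codisjoint hΓp hΓm,
      Complex.I_mul_I, neg_one_smul]
  have hmap : Λ.map Γ = LinearMap.ker (T + LinearMap.id) :=
    LinearMap.map_ker_sub_id_eq_ker_add_id hTΓ hΓΓ
  have hperp : Λ.map Γ = Λᗮ :=
    hmap.trans (LinearMap.IsSymmetric.orthogonal_ker_sub_id_eq_ker_add_id hsa hsq).symm
  have hΓinj : Function.Injective Γ :=
    Function.LeftInverse.injective (g := -Γ) fun x => neg_eq_iff_eq_neg.mpr congr($hΓΓ x)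
  have hcomplΛ : IsCompl Λ (Λ.map Γ) := hperp ▸ Λ.isCompl_orthogonal
  refine ⟨fun x hx y hy => ?_, hmap, hperp, hcomplΛ, ?_⟩
  · exact inner_left_of_mem_orthogonal hy (hperp ▸ mem_map_of_mem hx)
  · rw [← finrank_add_eq_of_isCompl hcomplΛ, (equivMapOfInjective Γ hΓinj Λ).finrank_eq.symm,
      two_mul]

/-- Let `V = V⁺ ⊕ V⁻` be a finite-dimensional complex inner product space with
chirality operator `Γ` (`i` on `V⁺`, `-i` on `V⁻`) and `ω x y = ⟪Γ x, y⟫`, and let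
`T` be an odd self-adjoint unitary with `(+1)`-eigenspace `Λ_T = ker (T - id)`. Then
`ω` vanishes on `Λ_T`, `Γ(Λ_T) = ker (T + id)` is the orthogonal complement of `Λ_T`
(so `V = Λ_T ⊕ Γ(Λ_T)`), and `2 dim Λ_T = dim V`; i.e. `Λ_T` is Lagrangian. -/
theorem positive_eigenspace_is_lagrangian
    {V : Type*} [NormedAddCommGroup V] [InnerProductSpace ℂ V] [FiniteDimensional ℂ V]
    (Vp Vm : Submodule ℂ V) (hcompl : IsCompl Vp Vm)
    (horth : ∀ x ∈ Vp, ∀ y ∈ Vm, (inner ℂ x y : ℂ) = 0)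
    (Γ : V →ₗ[ℂ] V)
    (hΓp : ∀ x ∈ Vp, Γ x = Complex.I • x)
    (hΓm : ∀ x ∈ Vm, Γ x = (-Complex.I) • x)
    (T : V →ₗ[ℂ] V)
    (hsa : ∀ x y : V, (inner ℂ (T x) y : ℂ) = inner ℂ x (T y))
    (hsq : T ∘ₗ T = LinearMap.id)
    (hiso : ∀ x y : V, (inner ℂ (T x) (T y) : ℂ) = inner ℂ x y)
    (hoddp : ∀ x ∈ Vp, T x ∈ Vm) (hoddm : ∀ x ∈ Vm, T x ∈ Vp) :
    (∀ x ∈ LinearMap.ker (T - LinearMap.id), ∀ y ∈ LinearMap.ker (T - LinearMap.id),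
        (inner ℂ (Γ x) y : ℂ) = 0) ∧
    (LinearMap.ker (T - LinearMap.id)).map Γ = LinearMap.ker (T + LinearMap.id) ∧
    (LinearMap.ker (T - LinearMap.id)).map Γ = (LinearMap.ker (T - LinearMap.id))ᗮ ∧
    IsCompl (LinearMap.ker (T - LinearMap.id)) ((LinearMap.ker (T - LinearMap.id)).map Γ) ∧
    2 * Module.finrank ℂ (LinearMap.ker (T - LinearMap.id)) = Module.finrank ℂ V :=
  positive_eigenspace_is_lagrangian_general Vp Vm hcompl Γ hΓp hΓm T hsa hsq hoddp hoddm
end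

section
/- Let V = V⁺ ⊕ V⁻ be a finite-dimensional complex inner product space as above, with chirality operator Γ and form ω(x,y) = ⟨Γx, y⟩. The assignment T ↦ Λ_T = ker(T − id_V) is a bijection from the set of odd self-adjoint unitaries on V onto the set of Lagrangian subspaces of (V, ω). Its inverse sends a Lagrangian subspace L to the linear map equal to +id on L and to −id on the orthogonal complement L^⊥. -/
/-!
A self-adjoint involution `T` is the orthogonal reflection in its fixed space `Λ_T`, since
`(x + T x) / 2 ∈ Λ_T` and `(x - T x) / 2 ⊥ Λ_T`; hence `T` is determined by `Λ_T`. Since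
`Γ² = -1` and `V⁺`, `V⁻` are the `±i`-eigenspaces of `Γ`, the reflection in `L` is odd iff it
anticommutes with `Γ`, iff `Γ` swaps `L` and `Lᗮ`, iff `Γ L = Lᗮ`; for injective `Γ` the last
condition says exactly that `L` is `ω`-isotropic of half dimension.
-/

open Module Submodule

section Chirality

variable {k V : Type*} [Field k] [AddCommGroup V] [Module k V]
  {Vp Vm : Submodule k V} {Γ : V →ₗ[k] V} {a : k}

theorem mem_of_apply_eq_smul_of_isCompl (hcompl : IsCompl Vp Vm) {b : k} (hab : a ≠ b)
    (hΓp : ∀ x ∈ Vp, Γ x = a • x) (hΓm : ∀ x ∈ Vm, Γ x = b • x) {x : V}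
    (hx : Γ x = a • x) : x ∈ Vp := by
  obtain ⟨p, m, hp, hm, rfl⟩ := codisjoint_iff_exists_add_eq.mp hcompl.codisjoint x
  rw [map_add, hΓp p hp, hΓm m hm] at hx
  have hm0 : (b - a) • m = 0 := by linear_combination (norm := module) hx
  rw [(smul_eq_zero.mp hm0).resolve_left (sub_ne_zero.mpr hab.symm), add_zero]
  exact hp

theorem apply_apply_eq_mul_self_smul_of_isCompl (hcompl : IsCompl Vp Vm)
    (hΓp : ∀ x ∈ Vp, Γ x = a • x) (hΓm : ∀ x ∈ Vm, Γ x = (-a) • x) (x : V) :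
    Γ (Γ x) = (a * a) • x := by
  obtain ⟨p, m, hp, hm, rfl⟩ := codisjoint_iff_exists_add_eq.mp hcompl.codisjoint x
  rw [map_add, hΓp p hp, hΓm m hm, map_add, map_smul, map_smul, hΓp p hp, hΓm m hm]
  module

theorem swaps_iff_anticommute_of_isCompl (hcompl : IsCompl Vp Vm) (ha : a ≠ -a)
    (hΓp : ∀ x ∈ Vp, Γ x = a • x) (hΓm : ∀ x ∈ Vm, Γ x = (-a) • x) (T : V →ₗ[k] V) :
    ((∀ x ∈ Vp, T x ∈ Vm) ∧ (∀ x ∈ Vm, T x ∈ Vp)) ↔ ∀ x, Γ (T x) = -T (Γ x) := by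
  constructor
  · rintro ⟨hTp, hTm⟩ x
    obtain ⟨p, m, hp, hm, rfl⟩ := codisjoint_iff_exists_add_eq.mp hcompl.codisjoint x
    simp only [map_add, hΓp p hp, hΓm m hm, map_smul, hΓm _ (hTp p hp), hΓp _ (hTm m hm)]
    module
  · intro hT
    refine ⟨fun x hx => ?_, fun x hx => ?_⟩
    · refine mem_of_apply_eq_smul_of_isCompl hcompl.symm ha.symm hΓm hΓp ?_
      rw [hT, hΓp x hx, map_smul, neg_smul]
    · refine mem_of_apply_eq_smul_of_isCompl hcompl ha hΓp hΓm ?_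
      rw [hT, hΓm x hx, map_smul, neg_smul, neg_neg]

end Chirality

section Reflection

variable {𝕜 E : Type*} [RCLike 𝕜] [NormedAddCommGroup E] [InnerProductSpace 𝕜 E]

theorem LinearMap.mem_ker_sub_id {T : E →ₗ[𝕜] E} {x : E} :
    x ∈ LinearMap.ker (T - LinearMap.id) ↔ T x = x := by
  rw [LinearMap.mem_ker, LinearMap.sub_apply, LinearMap.id_apply, sub_eq_zero]

namespace Submodule

variable (K : Submodule 𝕜 E) [K.HasOrthogonalProjection]

theorem reflection_eq_neg_iff (x : E) : K.reflection x = -x ↔ x ∈ Kᗮ := by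
  rw [← Kᗮ.reflection_eq_self_iff, reflection_orthogonal_apply, neg_eq_iff_eq_neg]

theorem isSymmetric_reflection : (K.reflection : E →ₗ[𝕜] E).IsSymmetric := fun x y => by
  conv_lhs => rw [← K.reflection_reflection y]
  exact K.reflection.inner_map_map x (K.reflection y)

theorem reflection_anticommute_iff_map_eq_orthogonal {Γ : E →ₗ[𝕜] E}
    (hΓ : ∀ x, Γ (Γ x) = -x) :
    (∀ x, Γ (K.reflection x) = -K.reflection (Γ x)) ↔ K.map Γ = Kᗮ := by
  constructor
  · intro hR
    apply le_antisymm
    · rintro _ ⟨x, hx, rfl⟩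
      rw [← reflection_eq_neg_iff, ← neg_eq_iff_eq_neg, ← hR,
        reflection_mem_subspace_eq_self hx]
    · intro y hy
      have hΓy : Γ y ∈ K := by
        rw [← reflection_eq_self_iff, ← neg_neg (K.reflection (Γ y)), ← hR,
          reflection_mem_subspace_orthogonalComplement_eq_neg hy, map_neg, neg_neg]
      exact ⟨-Γ y, K.neg_mem hΓy, by rw [map_neg, hΓ, neg_neg]⟩
  · intro hmap x
    obtain ⟨p, hp, q, hq, rfl⟩ := K.exists_add_mem_mem_orthogonal x
    have hΓp : Γ p ∈ Kᗮ := hmap ▸ mem_map_of_mem hp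
    obtain ⟨k, hk, rfl⟩ := (hmap ▸ hq : q ∈ K.map Γ)
    have hΓΓk : Γ (Γ k) ∈ K := by rw [hΓ]; exact K.neg_mem hk
    simp only [map_add, reflection_mem_subspace_eq_self hp, reflection_mem_subspace_eq_self hΓΓk,
      reflection_mem_subspace_orthogonalComplement_eq_neg hq,
      reflection_mem_subspace_orthogonalComplement_eq_neg hΓp, map_neg]
    abel

theorem ker_reflection_sub_id :
    LinearMap.ker ((K.reflection : E →ₗ[𝕜] E) - LinearMap.id) = K := by
  ext x
  exact LinearMap.mem_ker_sub_id.trans (K.reflection_eq_self_iff x)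

end Submodule

theorem LinearMap.IsSymmetric.apply_eq_reflection_ker_sub_id {T : E →ₗ[𝕜] E}
    (hT : T.IsSymmetric) (hinv : T ∘ₗ T = LinearMap.id)
    [(LinearMap.ker (T - LinearMap.id)).HasOrthogonalProjection] (x : E) :
    T x = (LinearMap.ker (T - LinearMap.id)).reflection x := by
  have hTT : ∀ y, T (T y) = y := LinearMap.congr_fun hinv
  have hproj :
      (LinearMap.ker (T - LinearMap.id)).starProjection x = (2 : 𝕜)⁻¹ • (x + T x) := by
    refine eq_starProjection_of_mem_of_inner_eq_zero ?_ fun w hw => ?_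
    · rw [LinearMap.mem_ker_sub_id, map_smul, map_add, hTT, add_comm]
    · rw [LinearMap.mem_ker_sub_id] at hw
      have : x - (2 : 𝕜)⁻¹ • (x + T x) = (2 : 𝕜)⁻¹ • (x - T x) := by module
      rw [this, inner_smul_left, inner_sub_left, hT, hw, sub_self, mul_zero]
  rw [Submodule.reflection_apply, hproj]
  module

end Reflection

section Lagrangian

variable {𝕜 E : Type*} [RCLike 𝕜] [NormedAddCommGroup E] [InnerProductSpace 𝕜 E]
  [FiniteDimensional 𝕜 E]

def IsLagrangian (Γ : E →ₗ[𝕜] E) (L : Submodule 𝕜 E) : Prop :=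
  (∀ x ∈ L, ∀ y ∈ L, inner 𝕜 (Γ x) y = 0) ∧ 2 * finrank 𝕜 L = finrank 𝕜 E

theorem isLagrangian_iff_map_eq_orthogonal {Γ : E →ₗ[𝕜] E} (hΓ : Function.Injective Γ)
    (L : Submodule 𝕜 E) : IsLagrangian Γ L ↔ L.map Γ = Lᗮ := by
  have hrank : finrank 𝕜 (L.map Γ) = finrank 𝕜 L :=
    (equivMapOfInjective Γ hΓ L).finrank_eq.symm
  have hsum := L.finrank_add_finrank_orthogonal
  constructor
  · rintro ⟨hiso, hdim⟩
    refine eq_of_le_of_finrank_eq ?_ (by omega)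
    rintro _ ⟨x, hx, rfl⟩
    exact (mem_orthogonal' _ _).2 (hiso x hx)
  · intro hmap
    refine ⟨fun x hx => (mem_orthogonal' _ _).1 (hmap ▸ mem_map_of_mem hx), ?_⟩
    rw [hmap] at hrank
    omega

end Lagrangian

theorem odd_selfadjoint_unitaries_biject_with_lagrangians_general
    {V : Type*} [NormedAddCommGroup V] [InnerProductSpace ℂ V] [FiniteDimensional ℂ V]
    (Vp Vm : Submodule ℂ V) (hcompl : IsCompl Vp Vm)
    (Γ : V →ₗ[ℂ] V)
    (hΓp : ∀ x ∈ Vp, Γ x = Complex.I • x)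
    (hΓm : ∀ x ∈ Vm, Γ x = (-Complex.I) • x) :
    Set.BijOn (fun T : V →ₗ[ℂ] V => LinearMap.ker (T - LinearMap.id))
      { T : V →ₗ[ℂ] V |
          (∀ x y : V, (inner ℂ (T x) y : ℂ) = inner ℂ x (T y)) ∧
          T ∘ₗ T = LinearMap.id ∧
          (∀ x y : V, (inner ℂ (T x) (T y) : ℂ) = inner ℂ x y) ∧
          (∀ x ∈ Vp, T x ∈ Vm) ∧ (∀ x ∈ Vm, T x ∈ Vp) }
      { L : Submodule ℂ V |
          (∀ x ∈ L, ∀ y ∈ L, (inner ℂ (Γ x) y : ℂ) = 0) ∧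
          2 * Module.finrank ℂ L = Module.finrank ℂ V } ∧
    -- the inverse of this bijection sends `L` to `+id` on `L` and `-id` on `Lᗮ`:
    ∀ L : Submodule ℂ V,
      ((∀ x ∈ L, ∀ y ∈ L, (inner ℂ (Γ x) y : ℂ) = 0) ∧
        2 * Module.finrank ℂ L = Module.finrank ℂ V) →
      ∀ T : V →ₗ[ℂ] V,
        ((∀ x y : V, (inner ℂ (T x) y : ℂ) = inner ℂ x (T y)) ∧
          T ∘ₗ T = LinearMap.id ∧
          (∀ x y : V, (inner ℂ (T x) (T y) : ℂ) = inner ℂ x y) ∧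
          (∀ x ∈ Vp, T x ∈ Vm) ∧ (∀ x ∈ Vm, T x ∈ Vp)) →
        LinearMap.ker (T - LinearMap.id) = L →
        (∀ x ∈ L, T x = x) ∧ (∀ x ∈ Lᗮ, T x = -x) := by
  have hΓΓ (x : V) : Γ (Γ x) = -x := by
    rw [apply_apply_eq_mul_self_smul_of_isCompl hcompl hΓp hΓm, Complex.I_mul_I, neg_one_smul]
  have hΓinj : Function.Injective Γ :=
    Function.LeftInverse.injective (g := fun y => -Γ y) fun x => by simp only [hΓΓ, neg_neg]
  have hodd :=
    swaps_iff_anticommute_of_isCompl hcompl (mt self_eq_neg.mp Complex.I_ne_zero) hΓp hΓm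
  have hrefl {T : V →ₗ[ℂ] V} (hT : T.IsSymmetric) (hinv : T ∘ₗ T = LinearMap.id) :=
    hT.apply_eq_reflection_ker_sub_id hinv
  refine ⟨⟨?_, ?_, ?_⟩, ?_⟩
  · rintro T ⟨hsa, hinv, -, hT⟩
    rw [Set.mem_ofPred_eq, ← IsLagrangian, isLagrangian_iff_map_eq_orthogonal hΓinj,
      ← reflection_anticommute_iff_map_eq_orthogonal _ hΓΓ]
    simpa only [← hrefl hsa hinv] using (hodd T).1 hT
  · rintro T₁ ⟨hsa₁, hinv₁, -⟩ T₂ ⟨hsa₂, hinv₂, -⟩ (hker : LinearMap.ker _ = LinearMap.ker _)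
    ext x
    rw [hrefl hsa₁ hinv₁, hrefl hsa₂ hinv₂, hker]
  · intro L hL
    have hmap := (isLagrangian_iff_map_eq_orthogonal hΓinj L).1 hL
    exact ⟨L.reflection, ⟨L.isSymmetric_reflection, LinearMap.ext L.reflection_reflection,
      L.reflection.inner_map_map,
      (hodd _).2 ((L.reflection_anticommute_iff_map_eq_orthogonal hΓΓ).2 hmap)⟩,
      L.ker_reflection_sub_id⟩
  · rintro L - T ⟨hsa, hinv, -⟩ rfl
    exact ⟨fun x hx => (hrefl hsa hinv x).trans (reflection_mem_subspace_eq_self hx),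
      fun x hx => (hrefl hsa hinv x).trans (reflection_mem_subspace_orthogonalComplement_eq_neg hx)⟩

/-- On a finite-dimensional complex inner product space `V = V⁺ ⊕ V⁻` with chirality
operator `Γ` and form `ω x y = ⟪Γ x, y⟫`, the assignment `T ↦ Λ_T = ker (T - id)` is
a bijection from the set of odd self-adjoint unitaries on `V` onto the set of
Lagrangian subspaces of `(V, ω)`, whose inverse sends a Lagrangian `L` to the linear
map equal to `+id` on `L` and to `-id` on `Lᗮ`. -/
theorem odd_selfadjoint_unitaries_biject_with_lagrangians
    {V : Type*} [NormedAddCommGroup V] [InnerProductSpace ℂ V] [FiniteDimensional ℂ V]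
    (Vp Vm : Submodule ℂ V) (hcompl : IsCompl Vp Vm)
    (horth : ∀ x ∈ Vp, ∀ y ∈ Vm, (inner ℂ x y : ℂ) = 0)
    (Γ : V →ₗ[ℂ] V)
    (hΓp : ∀ x ∈ Vp, Γ x = Complex.I • x)
    (hΓm : ∀ x ∈ Vm, Γ x = (-Complex.I) • x) :
    Set.BijOn (fun T : V →ₗ[ℂ] V => LinearMap.ker (T - LinearMap.id))
      { T : V →ₗ[ℂ] V |
          (∀ x y : V, (inner ℂ (T x) y : ℂ) = inner ℂ x (T y)) ∧
          T ∘ₗ T = LinearMap.id ∧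
          (∀ x y : V, (inner ℂ (T x) (T y) : ℂ) = inner ℂ x y) ∧
          (∀ x ∈ Vp, T x ∈ Vm) ∧ (∀ x ∈ Vm, T x ∈ Vp) }
      { L : Submodule ℂ V |
          (∀ x ∈ L, ∀ y ∈ L, (inner ℂ (Γ x) y : ℂ) = 0) ∧
          2 * Module.finrank ℂ L = Module.finrank ℂ V } ∧
    -- the inverse of this bijection sends `L` to `+id` on `L` and `-id` on `Lᗮ`:
    ∀ L : Submodule ℂ V,
      ((∀ x ∈ L, ∀ y ∈ L, (inner ℂ (Γ x) y : ℂ) = 0) ∧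
        2 * Module.finrank ℂ L = Module.finrank ℂ V) →
      ∀ T : V →ₗ[ℂ] V,
        ((∀ x y : V, (inner ℂ (T x) y : ℂ) = inner ℂ x (T y)) ∧
          T ∘ₗ T = LinearMap.id ∧
          (∀ x y : V, (inner ℂ (T x) (T y) : ℂ) = inner ℂ x y) ∧
          (∀ x ∈ Vp, T x ∈ Vm) ∧ (∀ x ∈ Vm, T x ∈ Vp)) →
        LinearMap.ker (T - LinearMap.id) = L →
        (∀ x ∈ L, T x = x) ∧ (∀ x ∈ Lᗮ, T x = -x) :=
  odd_selfadjoint_unitaries_biject_with_lagrangians_general Vp Vm hcompl Γ hΓp hΓm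
end
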